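/- Let M be a strictly positive integer, let K be a nonempty subset of ℕ, and for every i ∈ {1,…,M} let H_i be a separable real Hilbert space with orthonormal basis (e_{i,k})_{k∈K}. Let β > 0 and let φ : ℝ → ℝ be an even differentiable convex function such that φ ≥ φ(0) = 0 and φ' is β-Lipschitzian. On the Hilbert direct sum H_1 ⊕ ⋯ ⊕ H_M define h(x_1,…,x_M) = Σ_{k∈K} φ(‖(⟨x_1, e_{1,k}⟩, …, ⟨x_M, e_{M,k}⟩)‖_2). Let γ > 0 and (x_1,…,x_M) ∈ H_1 ⊕ ⋯ ⊕ H_M, and set δ_k = prox_{γφ}(‖(⟨x_1,e_{1,k}⟩,…,⟨x_M,e_{M,k}⟩)‖_2)/‖(⟨x_1,e_{1,k}⟩,…,⟨x_M,e_{M,k}⟩)‖_2 when max_{1≤i≤M} |⟨x_i, e_{i,k}⟩| > 0 and δ_k = 1 otherwise. Then prox_{γh}(x_1,…,x_M) = (Σ_{k∈K} δ_k ⟨x_1, e_{1,k}⟩ e_{1,k}, …, Σ_{k∈K} δ_k ⟨x_M, e_{M,k}⟩ e_{M,k}). -/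

import Mathlib

/-- A finite `L²` product of complete spaces is complete (the uniformity of `PiLp` is
definitionally the product uniformity). -/
instance piLpCompleteSpace (p : ENNReal) {ι : Type*} [Fintype ι]
    (H : ι → Type*) [∀ i, NormedAddCommGroup (H i)] [∀ i, CompleteSpace (H i)] :
    CompleteSpace (PiLp p H) :=
  inferInstance

/-!
Read every point `y` through its coefficient vectors `cₖ y = (⟪y i, e i k⟫)ᵢ ∈ ℝ^M`, `k ∈ K`.
By Parseval `‖x - y‖² = ∑ₖ ‖cₖ x - cₖ y‖²`, so the objective `γ h y + ‖x - y‖² / 2` splits into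
the sum over `k` of `γ φ ‖cₖ y‖ + ‖cₖ x - cₖ y‖² / 2`. Since `‖cₖ x - v‖ ≥ |‖cₖ x‖ - ‖v‖|` and
`φ` is even, each summand is minimized at the radial rescaling `δₖ • cₖ x`, whose norm is the
scalar prox of `γ φ` at `‖cₖ x‖`; the proposed point has exactly these coefficient vectors, so it
is a minimizer. Minimizers are unique because `h` is convex (`φ` is convex and nondecreasing on
`[0, ∞)`), which makes the objective strongly convex. The Lipschitz bound on `φ'` together with
`φ'(0) = 0` gives `φ t ≤ β t²`, which keeps every series summable.
-/

open Set
open scoped InnerProductSpace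

/-- `P = prox_f`. -/
def IsProx (f P : ℝ → ℝ) : Prop :=
  ∀ s t, f (P s) + (s - P s) ^ 2 / 2 ≤ f t + (s - t) ^ 2 / 2

section Prox

variable {f P : ℝ → ℝ}

lemma ConvexOn.monotoneOn_Ici_of_forall_le (hf : ConvexOn ℝ univ f) {m : ℝ}
    (hm : ∀ t, f m ≤ f t) : MonotoneOn f (Ici m) := by
  intro a ha b _ hab
  rcases (mem_Ici.1 ha).eq_or_lt with rfl | hma
  · exact hm b
  · exact hf.le_right_of_left_le'' (mem_univ m) (mem_univ b) hma hab (hm a)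

lemma Function.Even.apply_abs {α β : Type*} [AddGroup α] [LinearOrder α] {g : α → β}
    (hg : Function.Even g) (t : α) : g |t| = g t := by
  rcases abs_choice t with h | h <;> rw [h]
  exact hg t

lemma IsProx.abs_le (hP : IsProx f P) (heven : Function.Even f) (hmono : MonotoneOn f (Ici 0))
    {s : ℝ} (hs : 0 ≤ s) : |P s| ≤ s := by
  by_contra! hlt
  have hmin := hP s s
  have hfs : f s ≤ f (P s) := heven.apply_abs (P s) ▸ hmono hs (mem_Ici.2 (abs_nonneg _)) hlt.le
  have hPs : P s = s := by nlinarith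
  rw [hPs, abs_of_nonneg hs] at hlt
  exact hlt.false

lemma IsProx.abs_div_le_one (hP : IsProx f P) (heven : Function.Even f)
    (hmono : MonotoneOn f (Ici 0)) {s : ℝ} (hs : 0 ≤ s) : |P s / s| ≤ 1 := by
  rw [abs_div, abs_of_nonneg hs]
  exact div_le_one_of_le₀ (hP.abs_le heven hmono hs) hs

lemma abs_sub_apply_zero_le_of_lipschitzWith {f' : ℝ → ℝ} {K : NNReal}
    (hderiv : ∀ t, HasDerivAt f (f' t) t) (hlip : LipschitzWith K f') (hf'0 : f' 0 = 0)
    {t : ℝ} (ht : 0 ≤ t) : |f t - f 0| ≤ K * t ^ 2 := by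
  have hbound : ∀ u ∈ Ico 0 t, ‖f' u‖ ≤ K * t := by
    intro u hu
    have := hlip.dist_le_mul u 0
    rw [Real.dist_eq, Real.dist_eq, hf'0, sub_zero, sub_zero, abs_of_nonneg hu.1] at this
    exact this.trans (by gcongr; exact hu.2.le)
  have := norm_image_sub_le_of_norm_deriv_le_segment'
    (fun u _ => (hderiv u).hasDerivWithinAt) hbound t (right_mem_Icc.2 ht)
  rw [Real.norm_eq_abs, sub_zero] at this
  linarith

lemma IsProx.comp_norm_smul_le {F : Type*} [NormedAddCommGroup F] [NormedSpace ℝ F]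
    (hP : IsProx f P) (heven : Function.Even f) (hmin : ∀ t, f 0 ≤ f t) {u : F} {δ : ℝ}
    (hδ : u ≠ 0 → δ = P ‖u‖ / ‖u‖) (v : F) :
    f ‖δ • u‖ + ‖u - δ • u‖ ^ 2 / 2 ≤ f ‖v‖ + ‖u - v‖ ^ 2 / 2 := by
  by_cases hu : u = 0
  · simp only [hu, smul_zero, sub_zero, norm_zero, ne_eq, OfNat.ofNat_ne_zero,
      not_false_eq_true, zero_pow, zero_div, add_zero, zero_sub, norm_neg]
    linarith [hmin ‖v‖, sq_nonneg ‖v‖]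
  have hnorm : 0 < ‖u‖ := norm_pos_iff.2 hu
  have hsmul : ‖δ • u‖ = |P ‖u‖| := by
    rw [norm_smul, hδ hu, Real.norm_eq_abs, abs_div, abs_norm, div_mul_cancel₀ _ hnorm.ne']
  have hsub : ‖u - δ • u‖ ^ 2 = (‖u‖ - P ‖u‖) ^ 2 := by
    rw [← one_smul ℝ u, smul_smul, ← sub_smul, one_smul, mul_one, norm_smul, mul_pow,
      Real.norm_eq_abs, sq_abs, hδ hu, ← mul_pow, sub_mul, one_mul, div_mul_cancel₀ _ hnorm.ne']
  have hdist : (‖u‖ - ‖v‖) ^ 2 ≤ ‖u - v‖ ^ 2 := by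
    rw [← sq_abs]
    exact pow_le_pow_left₀ (abs_nonneg _) (abs_norm_sub_norm_le u v) 2
  rw [hsmul, heven.apply_abs, hsub]
  linarith [hP ‖u‖ ‖v‖]

lemma ConvexOn.comp_norm {F : Type*} [SeminormedAddCommGroup F] [NormedSpace ℝ F]
    (hf : ConvexOn ℝ univ f) (hmono : MonotoneOn f (Ici 0)) :
    ConvexOn ℝ univ fun u : F => f ‖u‖ := by
  refine ⟨convex_univ, fun u _ v _ a b ha hb hab => ?_⟩
  calc f ‖a • u + b • v‖ ≤ f (a • ‖u‖ + b • ‖v‖) :=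
        hmono (norm_nonneg _) (mem_Ici.2 (by simp only [smul_eq_mul]; positivity))
          ((convexOn_norm convex_univ).2 trivial trivial ha hb hab)
    _ ≤ a • f ‖u‖ + b • f ‖v‖ := hf.2 trivial trivial ha hb hab

end Prox

lemma convexOn_tsum {κ E : Type*} [AddCommGroup E] [Module ℝ E] {s : Set E} (hs : Convex ℝ s)
    {g : κ → E → ℝ} (hg : ∀ k, ConvexOn ℝ s (g k)) (hsum : ∀ y ∈ s, Summable fun k => g k y) :
    ConvexOn ℝ s fun y => ∑' k, g k y := by
  refine ⟨hs, fun y hy z hz a b ha hb hab => ?_⟩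
  simp only [smul_eq_mul]
  rw [← tsum_mul_left, ← tsum_mul_left,
    ← ((hsum y hy).mul_left a).tsum_add ((hsum z hz).mul_left b)]
  exact (hsum _ (hs hy hz ha hb hab)).tsum_le_tsum (fun k => (hg k).2 hy hz ha hb hab)
    (((hsum y hy).mul_left a).add ((hsum z hz).mul_left b))

section StrongConvexity

variable {E : Type*} [NormedAddCommGroup E] [InnerProductSpace ℝ E]

lemma ConvexOn.strictConvexOn_add_norm_sub_sq {g : E → ℝ} (hg : ConvexOn ℝ univ g) (x : E) :
    StrictConvexOn ℝ univ fun y => g y + ‖x - y‖ ^ 2 / 2 := by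
  refine StrongConvexOn.strictConvexOn (m := 1) ?_ one_pos
  rw [strongConvexOn_iff_convex]
  have haffine : ConvexOn ℝ univ fun y => -⟪x, y⟫_ℝ + ‖x‖ ^ 2 / 2 :=
    ((-innerₛₗ ℝ x).convexOn convex_univ).add_const _
  refine (hg.add haffine).congr fun y _ => ?_
  simp only [Pi.add_apply, norm_sub_sq_real]
  ring

lemma ConvexOn.eq_of_forall_le_add_norm_sub_sq {g : E → ℝ} (hg : ConvexOn ℝ univ g) {x p q : E}
    (hp : ∀ y, g p + ‖x - p‖ ^ 2 / 2 ≤ g y + ‖x - y‖ ^ 2 / 2)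
    (hq : ∀ y, g q + ‖x - q‖ ^ 2 / 2 ≤ g y + ‖x - y‖ ^ 2 / 2) : p = q :=
  (hg.strictConvexOn_add_norm_sub_sq x).eq_of_isMinOn (isMinOn_univ_iff.2 hp)
    (isMinOn_univ_iff.2 hq) trivial trivial

end StrongConvexity

section SeparableProx

variable {κ E F : Type*} [NormedAddCommGroup E] [NormedSpace ℝ E] [NormedAddCommGroup F]
  [NormedSpace ℝ F] {f P : ℝ → ℝ}

lemma IsProx.tsum_comp_norm_add_le (hP : IsProx f P) (heven : Function.Even f)
    (hmin : ∀ t, f 0 ≤ f t) (c : κ → E →ₗ[ℝ] F)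
    (hc : ∀ y, HasSum (fun k => ‖c k y‖ ^ 2) (‖y‖ ^ 2))
    (hsum : ∀ y, Summable fun k => f ‖c k y‖) {x Q : E} {δ : κ → ℝ}
    (hδ : ∀ k, c k x ≠ 0 → δ k = P ‖c k x‖ / ‖c k x‖) (hQ : ∀ k, c k Q = δ k • c k x) (y : E) :
    ∑' k, f ‖c k Q‖ + ‖x - Q‖ ^ 2 / 2 ≤ ∑' k, f ‖c k y‖ + ‖x - y‖ ^ 2 / 2 := by
  have hobj : ∀ z, HasSum (fun k => f ‖c k z‖ + ‖c k x - c k z‖ ^ 2 / 2)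
      (∑' k, f ‖c k z‖ + ‖x - z‖ ^ 2 / 2) := fun z => by
    simpa only [map_sub] using (hsum z).hasSum.add ((hc (x - z)).div_const 2)
  refine hasSum_le (fun k => ?_) (hobj Q) (hobj y)
  rw [hQ k]
  exact hP.comp_norm_smul_le heven hmin (hδ k) _

end SeparableProx

section HilbertBasis

variable {κ E : Type*} [NormedAddCommGroup E] [InnerProductSpace ℝ E] (b : HilbertBasis κ ℝ E)

lemma HilbertBasis.hasSum_inner_sq (v : E) : HasSum (fun k => ⟪v, b k⟫_ℝ ^ 2) (‖v‖ ^ 2) := by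
  simpa only [real_inner_comm v, ← sq, real_inner_self_eq_norm_sq]
    using b.hasSum_inner_mul_inner v v

lemma HilbertBasis.memℓp_inner (v : E) : Memℓp (fun k => ⟪v, b k⟫_ℝ) 2 := by
  have hrepr : (b.repr v : κ → ℝ) = fun k => ⟪v, b k⟫_ℝ := by
    ext k
    rw [b.repr_apply_apply, real_inner_comm]
  exact hrepr ▸ (b.repr v).2

lemma HilbertBasis.inner_tsum_smul {a : κ → ℝ} (ha : Memℓp a 2) (j : κ) :
    ⟪∑' k, a k • b k, b j⟫_ℝ = a j := by
  rw [(b.hasSum_repr_symm ⟨a, ha⟩).tsum_eq, real_inner_comm, ← b.repr_apply_apply,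
    LinearIsometryEquiv.apply_symm_apply]

end HilbertBasis

section Coefficients

variable {ι κ : Type*} {H : ι → Type*} [∀ i, NormedAddCommGroup (H i)]
  [∀ i, InnerProductSpace ℝ (H i)] (e : ∀ i, HilbertBasis κ ℝ (H i))

noncomputable def coeffMap (k : κ) : PiLp 2 H →ₗ[ℝ] EuclideanSpace ℝ ι where
  toFun y := WithLp.toLp 2 fun i => ⟪y i, e i k⟫_ℝ
  map_add' y z := by ext i; simp [inner_add_left]
  map_smul' a y := by ext i; simp [real_inner_smul_left]

lemma coeffMap_apply (k : κ) (y : PiLp 2 H) (i : ι) : coeffMap e k y i = ⟪y i, e i k⟫_ℝ :=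
  rfl

lemma coeffMap_ne_zero_iff {k : κ} {y : PiLp 2 H} :
    coeffMap e k y ≠ 0 ↔ ∃ i, ⟪y i, e i k⟫_ℝ ≠ 0 := by
  simp only [ne_eq, ← not_forall, ← coeffMap_apply e k y]
  exact not_congr ⟨fun h i => by rw [h]; rfl, fun h => PiLp.ext h⟩

variable [Fintype ι]

lemma norm_coeffMap (k : κ) (y : PiLp 2 H) :
    ‖coeffMap e k y‖ = √(∑ i, ⟪y i, e i k⟫_ℝ ^ 2) := by
  simp only [EuclideanSpace.norm_eq, coeffMap_apply, Real.norm_eq_abs, sq_abs]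

lemma hasSum_norm_coeffMap_sq (y : PiLp 2 H) :
    HasSum (fun k => ‖coeffMap e k y‖ ^ 2) (‖y‖ ^ 2) := by
  simp only [norm_coeffMap, Real.sq_sqrt (Finset.sum_nonneg fun i _ => sq_nonneg _),
    PiLp.norm_sq_eq_of_L2]
  exact hasSum_sum fun i _ => (e i).hasSum_inner_sq (y i)

lemma coeffMap_toLp_tsum_smul (x : PiLp 2 H) {δ : κ → ℝ}
    (hδ : ∀ k, coeffMap e k x ≠ 0 → |δ k| ≤ 1) (k : κ) :
    coeffMap e k (WithLp.toLp 2 fun i => ∑' k, δ k • ⟪x i, e i k⟫_ℝ • e i k) =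
      δ k • coeffMap e k x := by
  ext i
  have hmem : Memℓp (fun k => δ k * ⟪x i, e i k⟫_ℝ) 2 := by
    refine ((e i).memℓp_inner (x i)).mono' fun k => ?_
    by_cases hk : coeffMap e k x = 0
    · simp [← coeffMap_apply e k x i, hk]
    · rw [norm_mul]
      exact mul_le_of_le_one_left (norm_nonneg _) (hδ k hk)
  simp only [coeffMap_apply, smul_smul, (e i).inner_tsum_smul hmem, PiLp.smul_apply, smul_eq_mul]

end Coefficients

theorem stmt_18_general (M : ℕ) (K : Set ℕ)
    (H : Fin M → Type*) [∀ i, NormedAddCommGroup (H i)] [∀ i, InnerProductSpace ℝ (H i)]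
    (e : ∀ i, HilbertBasis K ℝ (H i))
    (β : ℝ)
    (φ : ℝ → ℝ) (heven : ∀ t, φ (-t) = φ t) (hconv : ConvexOn ℝ Set.univ φ)
    (hφ0 : φ 0 = 0) (hφnn : ∀ t, φ 0 ≤ φ t)
    (φ' : ℝ → ℝ) (hderiv : ∀ t, HasDerivAt φ (φ' t) t)
    (hlip : LipschitzWith (Real.toNNReal β) φ')
    (h : PiLp 2 H → ℝ)
    (hdef : ∀ x : PiLp 2 H,
      h x = ∑' k : K, φ (Real.sqrt (∑ i, (inner ℝ (x i) (e i k) : ℝ) ^ 2)))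
    (γ : ℝ) (hγ : 0 < γ)
    -- `proxφ s = prox_{γφ} s` for every `s ∈ ℝ` :
    (proxφ : ℝ → ℝ)
    (hproxφ : ∀ s t : ℝ, γ * φ (proxφ s) + (s - proxφ s) ^ 2 / 2
      ≤ γ * φ t + (s - t) ^ 2 / 2)
    (x : PiLp 2 H) (δ : K → ℝ)
    -- definition of `δ k` when `max_i |⟨x i, e i k⟩| > 0` :
    (hδ1 : ∀ k : K, (∃ i, (inner ℝ (x i) (e i k) : ℝ) ≠ 0) →
      δ k = proxφ (Real.sqrt (∑ i, (inner ℝ (x i) (e i k) : ℝ) ^ 2)) /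
        Real.sqrt (∑ i, (inner ℝ (x i) (e i k) : ℝ) ^ 2))
    -- `p = prox_{γh} x` :
    (p : PiLp 2 H)
    (hp : ∀ y : PiLp 2 H, γ * h p + ‖x - p‖ ^ 2 / 2 ≤ γ * h y + ‖x - y‖ ^ 2 / 2) :
    p = (WithLp.toLp 2 (fun i => ∑' k : K, δ k • (inner ℝ (x i) (e i k) : ℝ) • e i k : ∀ i, H i) :
      PiLp 2 H) := by
  have hf_even : Function.Even fun t => γ * φ t := fun t => congrArg (γ * ·) (heven t)
  have hf_min : ∀ t, γ * φ 0 ≤ γ * φ t := fun t => mul_le_mul_of_nonneg_left (hφnn t) hγ.le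
  have hf_conv : ConvexOn ℝ univ fun t => γ * φ t := hconv.smul hγ.le
  have hf_mono := hf_conv.monotoneOn_Ici_of_forall_le hf_min
  have hprox : IsProx (fun t => γ * φ t) proxφ := hproxφ
  have hφ'0 : φ' 0 = 0 :=
    IsLocalMin.hasDerivAt_eq_zero (Filter.Eventually.of_forall hφnn) (hderiv 0)
  have hφ_le : ∀ t, 0 ≤ t → φ t ≤ Real.toNNReal β * t ^ 2 := fun t ht => by
    simpa [hφ0] using
      (le_abs_self _).trans (abs_sub_apply_zero_le_of_lipschitzWith hderiv hlip hφ'0 ht)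
  have hsum : ∀ y, Summable fun k => γ * φ ‖coeffMap e k y‖ := fun y =>
    (Summable.of_nonneg_of_le (fun k => hφ0 ▸ hφnn _) (fun k => hφ_le _ (norm_nonneg _))
      ((hasSum_norm_coeffMap_sq e y).summable.mul_left _)).mul_left γ
  have hh : ∀ y, γ * h y = ∑' k, γ * φ ‖coeffMap e k y‖ := fun y => by
    rw [hdef, tsum_mul_left]
    simp only [norm_coeffMap]
  have hδ : ∀ k, coeffMap e k x ≠ 0 → δ k = proxφ ‖coeffMap e k x‖ / ‖coeffMap e k x‖ :=
    fun k hk => by rw [norm_coeffMap]; exact hδ1 k ((coeffMap_ne_zero_iff e).1 hk)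
  have hQ := coeffMap_toLp_tsum_smul e x fun k hk =>
    hδ k hk ▸ hprox.abs_div_le_one hf_even hf_mono (norm_nonneg _)
  have hQ_min := hprox.tsum_comp_norm_add_le hf_even hf_min (coeffMap e)
    (hasSum_norm_coeffMap_sq e) hsum hδ hQ
  have hg_conv : ConvexOn ℝ univ fun y => ∑' k, γ * φ ‖coeffMap e k y‖ :=
    convexOn_tsum convex_univ (fun k => (hf_conv.comp_norm hf_mono).comp_linearMap _)
      fun y _ => hsum y
  exact hg_conv.eq_of_forall_le_add_norm_sub_sq (by simpa only [hh] using hp) hQ_min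

/-- In the setting of Statement 17
(`h x = ∑_{k ∈ K} φ(‖(⟨x 1, e 1 k⟩, …, ⟨x M, e M k⟩)‖₂)` on the Hilbert direct sum
`H 1 ⊕ ⋯ ⊕ H M`), for `γ > 0` and `x`, with
`δ k = prox_{γφ}(N k)/N k` if `max_i |⟨x i, e i k⟩| > 0` and `δ k = 1` otherwise
(`N k` the Euclidean norm of the coefficient vector), one has
`prox_{γh} x = (∑_k δ k ⟨x i, e i k⟩ • e i k)_i`. -/
theorem stmt_18 (M : ℕ) (hM : 0 < M) (K : Set ℕ) (hK : K.Nonempty)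
    (H : Fin M → Type*) [∀ i, NormedAddCommGroup (H i)] [∀ i, InnerProductSpace ℝ (H i)]
    [∀ i, CompleteSpace (H i)]
    (e : ∀ i, HilbertBasis K ℝ (H i))
    (β : ℝ) (hβ : 0 < β)
    (φ : ℝ → ℝ) (heven : ∀ t, φ (-t) = φ t) (hconv : ConvexOn ℝ Set.univ φ)
    (hφ0 : φ 0 = 0) (hφnn : ∀ t, φ 0 ≤ φ t)
    (φ' : ℝ → ℝ) (hderiv : ∀ t, HasDerivAt φ (φ' t) t)
    (hlip : LipschitzWith (Real.toNNReal β) φ')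
    (h : PiLp 2 H → ℝ)
    (hdef : ∀ x : PiLp 2 H,
      h x = ∑' k : K, φ (Real.sqrt (∑ i, (inner ℝ (x i) (e i k) : ℝ) ^ 2)))
    (γ : ℝ) (hγ : 0 < γ)
    -- `proxφ s = prox_{γφ} s` for every `s ∈ ℝ` :
    (proxφ : ℝ → ℝ)
    (hproxφ : ∀ s t : ℝ, γ * φ (proxφ s) + (s - proxφ s) ^ 2 / 2
      ≤ γ * φ t + (s - t) ^ 2 / 2)
    (x : PiLp 2 H) (δ : K → ℝ)
    -- definition of `δ k` when `max_i |⟨x i, e i k⟩| > 0` :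
    (hδ1 : ∀ k : K, (∃ i, (inner ℝ (x i) (e i k) : ℝ) ≠ 0) →
      δ k = proxφ (Real.sqrt (∑ i, (inner ℝ (x i) (e i k) : ℝ) ^ 2)) /
        Real.sqrt (∑ i, (inner ℝ (x i) (e i k) : ℝ) ^ 2))
    -- definition of `δ k` otherwise :
    (hδ2 : ∀ k : K, (∀ i, (inner ℝ (x i) (e i k) : ℝ) = 0) → δ k = 1)
    -- `p = prox_{γh} x` :
    (p : PiLp 2 H)
    (hp : ∀ y : PiLp 2 H, γ * h p + ‖x - p‖ ^ 2 / 2 ≤ γ * h y + ‖x - y‖ ^ 2 / 2) :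
    p = (WithLp.toLp 2 (fun i => ∑' k : K, δ k • (inner ℝ (x i) (e i k) : ℝ) • e i k : ∀ i, H i) :
      PiLp 2 H) :=
  stmt_18_general M K H e β φ heven hconv hφ0 hφnn φ' hderiv hlip h hdef γ hγ proxφ hproxφ x δ hδ1 p
    hp
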